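/- Let z₀ ~ N(0, (1−σ₀²)I_D) and ε ~ N(0, I_D) be independent, and define z_t = F̃(t)^{−1/2} z₀ + σ_t ε where F̃(t) > 0 and σ_t > 0. For the linear score ε_θ(z_t, t) = (σ_t/σ̊²_t) z_t with σ̊²_t := σ²_t + (1−σ₀²)/F̃(t), we have E[‖ε − ε_θ(z_t, t)‖²] = D · [(σ̊²_t − σ²_t)²/(σ̊²_t)² + σ²_t(σ̊²_t − σ²_t)/(σ̊²_t)²] = D·(1 − σ²_t/σ̊²_t). -/

import Mathlib

open MeasureTheory ProbabilityTheory Finset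
open MeasureTheory ProbabilityTheory Real Filter
open scoped NNReal ENNReal


lemma hasDerivAt_gauss {b : ℝ} (hb : 0 < b) (x : ℝ) :
    HasDerivAt (fun x : ℝ => -(2*b)⁻¹ * Real.exp (-b * x^2)) (x * Real.exp (-b * x^2)) x := by
  have h1 : HasDerivAt (fun x : ℝ => -b * x^2) (-b * (2*x)) x := by
    simpa [mul_comm] using ((hasDerivAt_pow 2 x).const_mul (-b))
  have h2 := (h1.exp).const_mul (-(2*b)⁻¹)
  refine h2.congr_deriv ?_
  field_simp [hb.ne']

lemma gauss_tendsto_sq {b : ℝ} (hb : 0 < b) :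
    Tendsto (fun x : ℝ => -b * x^2) atTop atBot ∧ Tendsto (fun x : ℝ => -b * x^2) atBot atBot := by
  have ht : Tendsto (fun x : ℝ => x^2) atTop atTop := tendsto_pow_atTop two_ne_zero
  have hbot : Tendsto (fun x : ℝ => x^2) atBot atTop := by
    have := ht.comp tendsto_neg_atBot_atTop
    simpa [Function.comp_def, neg_sq] using this
  constructor
  · exact ht.const_mul_atTop_of_neg (by linarith)
  · exact hbot.const_mul_atTop_of_neg (by linarith)

lemma gauss_tendsto {b : ℝ} (hb : 0 < b) :
    Tendsto (fun x : ℝ => -(2*b)⁻¹ * Real.exp (-b * x^2)) atTop (nhds 0) ∧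
    Tendsto (fun x : ℝ => -(2*b)⁻¹ * Real.exp (-b * x^2)) atBot (nhds 0) := by
  obtain ⟨h1, h2⟩ := gauss_tendsto_sq hb
  have e1 : Tendsto (fun x : ℝ => Real.exp (-b * x^2)) atTop (nhds 0) :=
    Real.tendsto_exp_atBot.comp h1
  have e2 : Tendsto (fun x : ℝ => Real.exp (-b * x^2)) atBot (nhds 0) :=
    Real.tendsto_exp_atBot.comp h2
  constructor
  · simpa using e1.const_mul (-(2*b)⁻¹)
  · simpa using e2.const_mul (-(2*b)⁻¹)

lemma integrable_lin_exp {b : ℝ} (hb : 0 < b) :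
    Integrable (fun x : ℝ => x * Real.exp (-b * x^2)) := by
  have := integrable_rpow_mul_exp_neg_mul_sq hb (s := 1) (by norm_num)
  simpa using this

lemma gauss_int_lin {b : ℝ} (hb : 0 < b) : ∫ x : ℝ, x * Real.exp (-b * x^2) = 0 := by
  have h := gauss_tendsto hb
  have := MeasureTheory.integral_of_hasDerivAt_of_tendsto (fun x => hasDerivAt_gauss hb x)
    (integrable_lin_exp hb) h.2 h.1
  simpa using this

lemma integrable_sq_exp {b : ℝ} (hb : 0 < b) :
    Integrable (fun x : ℝ => x^2 * Real.exp (-b * x^2)) := by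
  have := integrable_rpow_mul_exp_neg_mul_sq hb (s := 2) (by norm_num)
  have h2 : ∀ x : ℝ, x ^ (2:ℝ) = x ^ (2:ℕ) := fun x => Real.rpow_natCast x 2
  simpa [h2] using this

lemma gauss_int_sq {b : ℝ} (hb : 0 < b) :
    ∫ x : ℝ, x^2 * Real.exp (-b * x^2) = (2*b)⁻¹ * Real.sqrt (π / b) := by
  have e1 : ((fun x:ℝ => x) * fun x => x * Real.exp (-b * x^2))
      = fun x => x^2 * Real.exp (-b*x^2) := by funext x; simp [Pi.mul_apply]; ring
  have e2 : ((fun _:ℝ => (1:ℝ)) * fun x => -(2*b)⁻¹ * Real.exp (-b * x^2))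
      = fun x => -(2*b)⁻¹ * Real.exp (-b*x^2) := by funext x; simp
  have e3 : ((fun x:ℝ => x) * fun x => -(2*b)⁻¹ * Real.exp (-b * x^2))
      = fun x => -(2*b)⁻¹ * (x * Real.exp (-b*x^2)) := by funext x; simp [Pi.mul_apply]; ring
  have key := integral_mul_deriv_eq_deriv_mul_of_integrable
    (u := fun x : ℝ => x) (v := fun x : ℝ => -(2*b)⁻¹ * Real.exp (-b * x^2))
    (u' := fun _ => (1:ℝ)) (v' := fun x => x * Real.exp (-b * x^2))
    (fun x _ => hasDerivAt_id x) (fun x _ => hasDerivAt_gauss hb x)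
    (by rw [e1]; exact integrable_sq_exp hb)
    (by rw [e2]; exact (integrable_exp_neg_mul_sq hb).const_mul _)
    (by rw [e3]; exact (integrable_lin_exp hb).const_mul _)
  simp only [one_mul, integral_const_mul, integral_gaussian] at key
  have h1 : (fun x : ℝ => x * (x * Real.exp (-b * x^2))) = fun x => x^2 * Real.exp (-b*x^2) := by
    funext x; ring
  rw [show (∫ x : ℝ, x^2 * Real.exp (-b * x^2)) = ∫ x : ℝ, x * (x * Real.exp (-b * x^2)) from by rw [h1],
    key]
  ring


lemma integral_gaussianReal_eq {v : ℝ≥0} (hv : v ≠ 0) (g : ℝ → ℝ) :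
    ∫ x, g x ∂gaussianReal 0 v = ∫ x, gaussianPDFReal 0 v x * g x := by
  rw [gaussianReal_of_var_ne_zero _ hv]
  have hmeq : gaussianPDF 0 v = fun x => ((gaussianPDFReal 0 v x).toNNReal : ℝ≥0∞) := rfl
  rw [hmeq, integral_withDensity_eq_integral_smul ((measurable_gaussianPDFReal 0 v).real_toNNReal)]
  congr 1
  funext x
  rw [NNReal.smul_def, smul_eq_mul, Real.coe_toNNReal _ (gaussianPDFReal_nonneg 0 v x)]

lemma gaussianPDFReal_eq {v : ℝ≥0} (x : ℝ) :
    gaussianPDFReal 0 v x = (Real.sqrt (2*π*v))⁻¹ * Real.exp (-(2*(v:ℝ))⁻¹ * x^2) := by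
  rw [gaussianPDFReal]
  congr 1
  ring_nf

lemma hvpos {v : ℝ≥0} (hv : v ≠ 0) : (0:ℝ) < v :=
  NNReal.coe_pos.mpr (zero_lt_iff.mpr hv)

lemma moment2_gaussianReal {v : ℝ≥0} (hv : v ≠ 0) :
    ∫ x, x^2 ∂gaussianReal 0 v = v := by
  have hv' : (0:ℝ) < v := hvpos hv
  have hb : 0 < (2*(v:ℝ))⁻¹ := inv_pos.mpr (by linarith)
  rw [integral_gaussianReal_eq hv]
  have h : ∀ x : ℝ, gaussianPDFReal 0 v x * x^2
      = (Real.sqrt (2*π*v))⁻¹ * (x^2 * Real.exp (-(2*(v:ℝ))⁻¹ * x^2)) := by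
    intro x; rw [gaussianPDFReal_eq]; ring
  simp_rw [h]
  rw [integral_const_mul, gauss_int_sq hb]
  have h1 : (2*((2*(v:ℝ))⁻¹))⁻¹ = (v:ℝ) := by field_simp
  have h2 : π / (2*(v:ℝ))⁻¹ = 2*π*v := by field_simp
  rw [h1, h2]
  have hs : Real.sqrt (2*π*v) ≠ 0 :=
    ne_of_gt (Real.sqrt_pos.mpr (by have := Real.pi_pos; nlinarith))
  field_simp

lemma moment1_gaussianReal {v : ℝ≥0} (hv : v ≠ 0) :
    ∫ x, x ∂gaussianReal 0 v = 0 := by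
  have hv' : (0:ℝ) < v := hvpos hv
  have hb : 0 < (2*(v:ℝ))⁻¹ := inv_pos.mpr (by linarith)
  rw [integral_gaussianReal_eq hv]
  have h : ∀ x : ℝ, gaussianPDFReal 0 v x * x
      = (Real.sqrt (2*π*v))⁻¹ * (x * Real.exp (-(2*(v:ℝ))⁻¹ * x^2)) := by
    intro x; rw [gaussianPDFReal_eq]; ring
  simp_rw [h]
  rw [integral_const_mul, gauss_int_lin hb, mul_zero]

lemma integrable_sq_gaussianReal {v : ℝ≥0} (hv : v ≠ 0) :
    Integrable (fun x : ℝ => x^2) (gaussianReal 0 v) := by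
  have hv' : (0:ℝ) < v := hvpos hv
  have hb : 0 < (2*(v:ℝ))⁻¹ := inv_pos.mpr (by linarith)
  rw [gaussianReal_of_var_ne_zero _ hv]
  have hmeq : gaussianPDF 0 v = fun x => ((gaussianPDFReal 0 v x).toNNReal : ℝ≥0∞) := rfl
  rw [hmeq, integrable_withDensity_iff_integrable_smul ((measurable_gaussianPDFReal 0 v).real_toNNReal)]
  have h : ∀ x : ℝ, ((gaussianPDFReal 0 v x).toNNReal : ℝ≥0) • (x^2)
      = (Real.sqrt (2*π*v))⁻¹ * (x^2 * Real.exp (-(2*(v:ℝ))⁻¹ * x^2)) := by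
    intro x
    rw [NNReal.smul_def, smul_eq_mul, Real.coe_toNNReal _ (gaussianPDFReal_nonneg 0 v x),
      gaussianPDFReal_eq]
    ring
  simp_rw [h]
  exact (integrable_sq_exp hb).const_mul _

lemma integrable_id_gaussianReal {v : ℝ≥0} (hv : v ≠ 0) :
    Integrable (fun x : ℝ => x) (gaussianReal 0 v) := by
  have hv' : (0:ℝ) < v := hvpos hv
  have hb : 0 < (2*(v:ℝ))⁻¹ := inv_pos.mpr (by linarith)
  rw [gaussianReal_of_var_ne_zero _ hv]
  have hmeq : gaussianPDF 0 v = fun x => ((gaussianPDFReal 0 v x).toNNReal : ℝ≥0∞) := rfl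
  rw [hmeq, integrable_withDensity_iff_integrable_smul ((measurable_gaussianPDFReal 0 v).real_toNNReal)]
  have h : ∀ x : ℝ, ((gaussianPDFReal 0 v x).toNNReal : ℝ≥0) • x
      = (Real.sqrt (2*π*v))⁻¹ * (x * Real.exp (-(2*(v:ℝ))⁻¹ * x^2)) := by
    intro x
    rw [NNReal.smul_def, smul_eq_mul, Real.coe_toNNReal _ (gaussianPDFReal_nonneg 0 v x),
      gaussianPDFReal_eq]
    ring
  simp_rw [h]
  exact (integrable_lin_exp hb).const_mul _


lemma pi_map_eval {D : ℕ} (μ : Measure ℝ) [IsProbabilityMeasure μ] (i : Fin D) :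
    (Measure.pi fun _ : Fin D => μ).map (Function.eval i) = μ := by
  ext s hs
  rw [Measure.map_apply (measurable_pi_apply i) hs]
  have hpre : Function.eval i ⁻¹' s
      = Set.pi Set.univ (Function.update (fun _ : Fin D => (Set.univ : Set ℝ)) i s) := by
    ext x
    simp only [Set.mem_preimage, Function.eval, Set.mem_univ_pi, Function.update_apply]
    constructor
    · intro h j
      by_cases hj : j = i
      · subst hj; simp [h]
      · simp [hj]
    · intro h
      simpa using h i
  rw [hpre, Measure.pi_pi]
  simp [Function.update_apply, apply_ite μ, measure_univ, Finset.prod_ite_eq']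

lemma integral_pi_eval {D : ℕ} (μ : Measure ℝ) [IsProbabilityMeasure μ] (i : Fin D)
    {g : ℝ → ℝ} (hg : AEStronglyMeasurable g μ) :
    ∫ x : Fin D → ℝ, g (x i) ∂(Measure.pi fun _ => μ) = ∫ t, g t ∂μ := by
  conv_rhs => rw [← pi_map_eval μ i]
  rw [integral_map (measurable_pi_apply i).aemeasurable (by rwa [pi_map_eval])]

lemma integrable_pi_eval {D : ℕ} (μ : Measure ℝ) [IsProbabilityMeasure μ] (i : Fin D)
    {g : ℝ → ℝ} (hg : Integrable g μ) :
    Integrable (fun x : Fin D → ℝ => g (x i)) (Measure.pi fun _ => μ) := by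
  have h : Integrable g ((Measure.pi fun _ : Fin D => μ).map (Function.eval i)) := by
    rwa [pi_map_eval]
  exact (integrable_map_measure h.aestronglyMeasurable
    (measurable_pi_apply i).aemeasurable).mp h

/-- Denoising score matching loss under Gaussian data and linear (Normal) score model:
with z₀ ~ N(0,(1−σ₀²)I_D), ε ~ N(0,I_D) independent, z_t = F̃(t)^{-1/2} z₀ + σ_t ε, and
ε_θ(z_t) = (σ_t/σ̊²_t) z_t where σ̊²_t = σ²_t + (1−σ₀²)/F̃(t), one has
E‖ε − ε_θ(z_t)‖² = D·[(σ̊²_t−σ²_t)²/(σ̊²_t)² + σ²_t(σ̊²_t−σ²_t)/(σ̊²_t)²] = D(1−σ²_t/σ̊²_t). -/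
theorem gaussian_dsm_loss (D : ℕ) (hD : 1 ≤ D) (σ₀sq Ft σt : ℝ)
    (h0 : 0 ≤ σ₀sq) (h1 : σ₀sq < 1) (hF : 0 < Ft) (hσ : 0 < σt)
    (σringsq : ℝ) (hring : σringsq = σt ^ 2 + (1 - σ₀sq) / Ft) :
    (∫ p : (Fin D → ℝ) × (Fin D → ℝ),
        ∑ i, (p.2 i - (σt / σringsq) * (Ft ^ (-(1:ℝ)/2) * p.1 i + σt * p.2 i)) ^ 2
        ∂((Measure.pi fun _ : Fin D => gaussianReal 0 (Real.toNNReal (1 - σ₀sq))).prod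
          (Measure.pi fun _ : Fin D => gaussianReal 0 1)))
      = D * ((σringsq - σt ^ 2) ^ 2 / σringsq ^ 2 +
             σt ^ 2 * (σringsq - σt ^ 2) / σringsq ^ 2) ∧
    (D : ℝ) * ((σringsq - σt ^ 2) ^ 2 / σringsq ^ 2 +
             σt ^ 2 * (σringsq - σt ^ 2) / σringsq ^ 2)
      = D * (1 - σt ^ 2 / σringsq) := by
  have hσr : 0 < σringsq := by
    rw [hring]
    have h2 := div_pos (show (0:ℝ) < 1 - σ₀sq by linarith) hF
    nlinarith [pow_pos hσ 2]
  have hσrne : σringsq ≠ 0 := ne_of_gt hσr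
  constructor
  swap
  · field_simp
    ring
  -- setup
  set v₀ : ℝ≥0 := Real.toNNReal (1 - σ₀sq) with hv₀def
  have hv₀ : v₀ ≠ 0 := by
    simp only [hv₀def, ne_eq, Real.toNNReal_eq_zero, not_le]
    linarith
  have hv₀c : (v₀ : ℝ) = 1 - σ₀sq := Real.coe_toNNReal _ (by linarith)
  have h1ne : (1 : ℝ≥0) ≠ 0 := one_ne_zero
  set μp := Measure.pi fun _ : Fin D => gaussianReal 0 v₀ with hμp
  set νp := Measure.pi fun _ : Fin D => gaussianReal 0 1 with hνp
  set A := Ft ^ (-(1:ℝ)/2) with hA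
  set c := σt / σringsq with hc
  -- componentwise integrability on pi spaces
  have hx2 : ∀ i : Fin D, Integrable (fun x : Fin D → ℝ => (x i)^2) μp :=
    fun i => integrable_pi_eval _ i (integrable_sq_gaussianReal hv₀)
  have hy2 : ∀ i : Fin D, Integrable (fun y : Fin D → ℝ => (y i)^2) νp :=
    fun i => integrable_pi_eval _ i (integrable_sq_gaussianReal h1ne)
  have hx1 : ∀ i : Fin D, Integrable (fun x : Fin D → ℝ => x i) μp :=
    fun i => integrable_pi_eval _ i (integrable_id_gaussianReal hv₀)
  have hy1 : ∀ i : Fin D, Integrable (fun y : Fin D → ℝ => y i) νp :=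
    fun i => integrable_pi_eval _ i (integrable_id_gaussianReal h1ne)
  -- integrability on the product
  have ix2 : ∀ i : Fin D, Integrable (fun p : (Fin D → ℝ) × (Fin D → ℝ) => (p.1 i)^2)
      (μp.prod νp) := by
    intro i
    have := (hx2 i).mul_prod (integrable_const (1:ℝ) (μ := νp))
    simpa using this
  have iy2 : ∀ i : Fin D, Integrable (fun p : (Fin D → ℝ) × (Fin D → ℝ) => (p.2 i)^2)
      (μp.prod νp) := by
    intro i
    have := (integrable_const (1:ℝ) (μ := μp)).mul_prod (hy2 i)
    simpa using this
  have icr : ∀ i : Fin D, Integrable (fun p : (Fin D → ℝ) × (Fin D → ℝ) => p.1 i * p.2 i)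
      (μp.prod νp) := fun i => (hx1 i).mul_prod (hy1 i)
  -- integrals on the product
  have ex2 : ∀ i : Fin D, (∫ p : (Fin D → ℝ) × (Fin D → ℝ), (p.1 i)^2 ∂μp.prod νp)
      = 1 - σ₀sq := by
    intro i
    have h : (fun p : (Fin D → ℝ) × (Fin D → ℝ) => (p.1 i)^2)
        = fun p => (fun x : Fin D → ℝ => (x i)^2) p.1 * (fun _ : Fin D → ℝ => (1:ℝ)) p.2 := by
      funext p; simp
    have hpm := integral_prod_mul (μ := μp) (ν := νp)
      (fun x : Fin D → ℝ => (x i)^2) (fun _ : Fin D → ℝ => (1:ℝ))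
    rw [h]
    rw [hpm, integral_pi_eval _ i (integrable_sq_gaussianReal hv₀).aestronglyMeasurable,
      moment2_gaussianReal hv₀, hv₀c]
    simp
  have ey2 : ∀ i : Fin D, (∫ p : (Fin D → ℝ) × (Fin D → ℝ), (p.2 i)^2 ∂μp.prod νp) = 1 := by
    intro i
    have h : (fun p : (Fin D → ℝ) × (Fin D → ℝ) => (p.2 i)^2)
        = fun p => (fun _ : Fin D → ℝ => (1:ℝ)) p.1 * (fun y : Fin D → ℝ => (y i)^2) p.2 := by
      funext p; simp
    have hpm := integral_prod_mul (μ := μp) (ν := νp)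
      (fun _ : Fin D → ℝ => (1:ℝ)) (fun y : Fin D → ℝ => (y i)^2)
    rw [h]
    rw [hpm, integral_pi_eval _ i (integrable_sq_gaussianReal h1ne).aestronglyMeasurable,
      moment2_gaussianReal h1ne]
    simp
  have ecr : ∀ i : Fin D, (∫ p : (Fin D → ℝ) × (Fin D → ℝ), p.1 i * p.2 i ∂μp.prod νp) = 0 := by
    intro i
    have hpm := integral_prod_mul (μ := μp) (ν := νp)
      (fun x : Fin D → ℝ => x i) (fun y : Fin D → ℝ => y i)
    rw [show (fun p : (Fin D → ℝ) × (Fin D → ℝ) => p.1 i * p.2 i)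
        = fun p => (fun x : Fin D → ℝ => x i) p.1 * (fun y : Fin D → ℝ => y i) p.2 from rfl]
    rw [hpm, integral_pi_eval _ i (integrable_id_gaussianReal hv₀).aestronglyMeasurable,
      moment1_gaussianReal hv₀]
    simp
  -- pointwise expansion
  set B := 1 - c * σt with hB
  set k := c * A with hk
  have hterm : ∀ (i : Fin D) (p : (Fin D → ℝ) × (Fin D → ℝ)),
      (p.2 i - c * (A * p.1 i + σt * p.2 i))^2
        = B^2 * (p.2 i)^2 - (2*B*k) * (p.1 i * p.2 i) + k^2 * (p.1 i)^2 := by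
    intro i p
    rw [hB, hk]
    ring
  have iterm : ∀ i : Fin D, Integrable
      (fun p : (Fin D → ℝ) × (Fin D → ℝ) => (p.2 i - c * (A * p.1 i + σt * p.2 i))^2)
      (μp.prod νp) := by
    intro i
    simp only [hterm]
    exact (((iy2 i).const_mul (B^2)).sub ((icr i).const_mul (2*B*k))).add
      ((ix2 i).const_mul (k^2))
  have eterm : ∀ i : Fin D,
      (∫ p : (Fin D → ℝ) × (Fin D → ℝ), (p.2 i - c * (A * p.1 i + σt * p.2 i))^2 ∂μp.prod νp)
        = B^2 + k^2 * (1 - σ₀sq) := by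
    intro i
    simp only [hterm]
    have hI1 : Integrable (fun p : (Fin D → ℝ) × (Fin D → ℝ) =>
        B^2 * (p.2 i)^2 - 2*B*k * (p.1 i * p.2 i)) (μp.prod νp) :=
      ((iy2 i).const_mul (B^2)).sub ((icr i).const_mul (2*B*k))
    have hI2 : Integrable (fun p : (Fin D → ℝ) × (Fin D → ℝ) =>
        k^2 * (p.1 i)^2) (μp.prod νp) := (ix2 i).const_mul (k^2)
    rw [integral_add hI1 hI2,
      integral_sub ((iy2 i).const_mul (B^2)) ((icr i).const_mul (2*B*k)),
      integral_const_mul, integral_const_mul, integral_const_mul, ex2 i, ey2 i, ecr i]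
    ring
  -- put it together
  rw [integral_finset_sum _ (fun i _ => iterm i)]
  simp only [eterm]
  rw [Finset.sum_const, Finset.card_univ, Fintype.card_fin, nsmul_eq_mul]
  congr 1
  -- final algebra
  have hA2 : A^2 = Ft⁻¹ := by
    rw [hA, ← Real.rpow_natCast (Ft ^ ((-1:ℝ)/2)) 2, ← Real.rpow_mul hF.le]
    norm_num
    rw [Real.rpow_neg_one]
  have h1σ : 1 - σ₀sq = (σringsq - σt^2) * Ft := by
    field_simp at hring ⊢
    linarith
  rw [hB, hk, hc, h1σ]
  have : (c * A)^2 = c^2 * Ft⁻¹ := by rw [mul_pow, hA2]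
  field_simp
  ring_nf
  rw [hA2]
  field_simp
  ring
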